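/- arXiv:1406.1589 — 7 statements merged into one kernel-verified Lean document; each statement's English description precedes it below -/
import Mathlib

section
/- For all nonnegative integers n and k, the sum over i+j=k of binom(n,2i)*binom(n,2j) is congruent modulo 2 to 0 if k is odd, and to binom(n,k) if k is even. -/
/-! Modulo 2 the swap `(i, j) ↦ (j, i)` pairs off the off-diagonal terms of the sum, so only the
diagonal term `binom(n, k)²` survives when `k` is even, and `x² = x` in `ZMod 2`. -/

namespace Finset.Nat

theorem filter_fst_eq_snd_antidiagonal (k : ℕ) :
    {p ∈ antidiagonal k | p.1 = p.2} = if Odd k then ∅ else {(k / 2, k / 2)} := by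
  ext ⟨a, b⟩
  split_ifs with hk
  · simp only [mem_filter, HasAntidiagonal.mem_antidiagonal, notMem_empty, iff_false, not_and]
    rintro rfl rfl
    exact Nat.not_odd_iff_even.mpr (Even.add_self a) hk
  · obtain ⟨m, rfl⟩ := Nat.not_odd_iff_even.mp hk
    simp only [mem_filter, HasAntidiagonal.mem_antidiagonal, mem_singleton, Prod.mk.injEq]
    omega

section CharTwo

variable {R : Type*} [Semiring R] [CharP R 2]

theorem sum_antidiagonal_filter_fst_ne_snd_of_charTwo {g : ℕ × ℕ → R}
    (hg : ∀ p, g p.swap = g p) (k : ℕ) :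
    ∑ p ∈ antidiagonal k with p.1 ≠ p.2, g p = 0 := by
  refine sum_involution (fun p _ => p.swap) (fun p _ => ?_) (fun p hp _ => ?_)
    (fun p hp => ?_) (fun p _ => p.swap_swap)
  · rw [hg, CharTwo.add_self_eq_zero]
  · simp only [mem_filter] at hp
    exact fun h => hp.2 (congrArg Prod.snd h)
  · simp only [mem_filter, HasAntidiagonal.mem_antidiagonal] at hp ⊢
    exact ⟨by simpa [add_comm] using hp.1, Ne.symm hp.2⟩

theorem sum_antidiagonal_of_charTwo {g : ℕ × ℕ → R} (hg : ∀ p, g p.swap = g p) (k : ℕ) :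
    ∑ p ∈ antidiagonal k, g p = if Odd k then 0 else g (k / 2, k / 2) := by
  rw [← sum_filter_add_sum_filter_not _ (fun p : ℕ × ℕ => p.1 = p.2),
    sum_antidiagonal_filter_fst_ne_snd_of_charTwo hg, add_zero,
    filter_fst_eq_snd_antidiagonal]
  split_ifs <;> simp

end CharTwo

theorem sum_antidiagonal_mul_of_charTwo {R : Type*} [CommSemiring R] [CharP R 2]
    (f : ℕ → R) (k : ℕ) :
    ∑ p ∈ antidiagonal k, f p.1 * f p.2 = if Odd k then 0 else f (k / 2) ^ 2 := by
  rw [sum_antidiagonal_of_charTwo (fun p => mul_comm _ _), sq]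

end Finset.Nat

theorem stmt_0 (n k : ℕ) :
    (∑ p ∈ Finset.HasAntidiagonal.antidiagonal k, n.choose (2 * p.1) * n.choose (2 * p.2)) ≡
      (if Odd k then 0 else n.choose k) [MOD 2] := by
  rw [← ZMod.natCast_eq_natCast_iff]
  push_cast
  rw [Finset.Nat.sum_antidiagonal_mul_of_charTwo (fun i => (n.choose (2 * i) : ZMod 2))]
  split_ifs with hk
  · rfl
  · rw [ZMod.pow_card, Nat.two_mul_div_two_of_even (Nat.not_odd_iff_even.mp hk)]
end

section
/- For all nonnegative integers n, m, k with n+m odd, the sum over i+j=k of binom(n,2i)*binom(m,2j) is congruent to binom(n+m,2k) modulo 2. -/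
/-! Reduce mod 2 and expand `(n + m).choose (2 * k)` by Vandermonde. A term `n.choose i * m.choose j`
with `i + j = 2 * k` and `i` odd also has `j` odd; since one of `n`, `m` is even and
`a * n.choose a = n * (n - 1).choose (a - 1)`, such a term is even. The surviving terms are those
with both indices even, which is the left-hand side. -/

open Finset

theorem Nat.two_dvd_choose_of_even_of_odd {n a : ℕ} (hn : Even n) (ha : Odd a) :
    2 ∣ n.choose a := by
  obtain ⟨b, rfl⟩ : ∃ b, a = b + 1 := ⟨a - 1, by grind⟩
  cases n with
  | zero => simp
  | succ n =>
    apply (Nat.coprime_two_left.mpr ha).dvd_of_dvd_mul_right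
    rw [← Nat.add_one_mul_choose_eq]
    exact hn.two_dvd.mul_right _

theorem Finset.Nat.sum_antidiagonal_two_mul_eq {M : Type*} [AddCommMonoid M] (f : ℕ × ℕ → M)
    (k : ℕ) (hf : ∀ p ∈ antidiagonal (2 * k), Odd p.1 → f p = 0) :
    ∑ p ∈ antidiagonal (2 * k), f p = ∑ p ∈ antidiagonal k, f (2 * p.1, 2 * p.2) := by
  have hinj : Set.InjOn (fun p : ℕ × ℕ => (2 * p.1, 2 * p.2)) (antidiagonal k) := by
    intro p _ q _ hpq
    simp only [Prod.mk.injEq] at hpq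
    ext <;> omega
  rw [← sum_image hinj]
  refine (sum_subset ?_ ?_).symm
  · intro p hp
    simp only [mem_image, HasAntidiagonal.mem_antidiagonal] at hp ⊢
    grind
  · intro p hp hp_notMem
    refine hf p hp (Nat.not_even_iff_odd.mp fun ⟨i, hi⟩ => hp_notMem ?_)
    rw [HasAntidiagonal.mem_antidiagonal] at hp
    refine mem_image.mpr ⟨(i, k - i), HasAntidiagonal.mem_antidiagonal.mpr (by omega), ?_⟩
    ext <;> simp <;> omega

theorem stmt_1 (n m k : ℕ) (h : Odd (n + m)) :
    (∑ p ∈ Finset.HasAntidiagonal.antidiagonal k, n.choose (2 * p.1) * m.choose (2 * p.2)) ≡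
      (n + m).choose (2 * k) [MOD 2] := by
  rw [← ZMod.natCast_eq_natCast_iff, Nat.add_choose_eq]
  push_cast
  refine (Finset.Nat.sum_antidiagonal_two_mul_eq
    (fun p => (n.choose p.1 * m.choose p.2 : ZMod 2)) k fun p hp hp₁ => ?_).symm
  have hp₂ : Odd p.2 := by
    rw [HasAntidiagonal.mem_antidiagonal] at hp
    grind
  rw [← Nat.cast_mul, ZMod.natCast_eq_zero_iff]
  rcases Nat.even_or_odd n with hn | hn
  · exact (Nat.two_dvd_choose_of_even_of_odd hn hp₁).mul_right _
  · have hm : Even m := by grind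
    exact (Nat.two_dvd_choose_of_even_of_odd hm hp₂).mul_left _
end

section
/- For every nonnegative integer k, the period-doubling sequence term d_k is odd if and only if k belongs to the set J = {(2n+1)*4^m - 1 : n, m nonnegative integers}. -/
/-- The Thue–Morse sequence: `e k = (-1)^(binary digit sum of k)`. -/
def thueMorse (k : ℕ) : ℤ := (-1) ^ ((Nat.digits 2 k).sum)

/-- The period-doubling sequence `d k = |e k - e (k+1)| / 2`. -/
def periodDoubling (k : ℕ) : ℕ := (thueMorse k - thueMorse (k + 1)).natAbs / 2

lemma tm_pm (k : ℕ) : thueMorse k = 1 ∨ thueMorse k = -1 := by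
  unfold thueMorse
  rcases Nat.even_or_odd ((Nat.digits 2 k).sum) with h | h
  · exact Or.inl (Even.neg_one_pow h)
  · exact Or.inr (Odd.neg_one_pow h)

lemma tm_even (k : ℕ) : thueMorse (2 * k) = thueMorse k := by
  rcases Nat.eq_zero_or_pos k with rfl | hk
  · rfl
  · unfold thueMorse
    rw [Nat.digits_def' (by norm_num : 1 < 2) (by omega)]
    simp [Nat.mul_div_cancel_left, Nat.mul_mod_right]

lemma tm_odd (k : ℕ) : thueMorse (2 * k + 1) = -thueMorse k := by
  unfold thueMorse
  rw [Nat.digits_def' (by norm_num : 1 < 2) (by omega)]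
  have h1 : (2 * k + 1) % 2 = 1 := by omega
  have h2 : (2 * k + 1) / 2 = k := by omega
  rw [h1, h2]
  rw [List.sum_cons, pow_add]
  ring

lemma pd_odd_iff (k : ℕ) :
    Odd (periodDoubling k) ↔ thueMorse k ≠ thueMorse (k + 1) := by
  rcases tm_pm k with h1 | h1 <;> rcases tm_pm (k + 1) with h2 | h2 <;>
    simp [periodDoubling, h1, h2]

theorem stmt_3 (k : ℕ) :
    Odd (periodDoubling k) ↔ ∃ n m : ℕ, (2 * n + 1) * 4 ^ m - 1 = k := by
  induction k using Nat.strong_induction_on with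
  | _ k ih =>
  have hconv : ∀ j : ℕ, (∃ n m : ℕ, (2 * n + 1) * 4 ^ m - 1 = j) ↔
      (∃ n m : ℕ, (2 * n + 1) * 4 ^ m = j + 1) := by
    intro j
    constructor
    · rintro ⟨n, m, h⟩
      have hp : 1 ≤ (2 * n + 1) * 4 ^ m := Nat.one_le_iff_ne_zero.mpr (by positivity)
      exact ⟨n, m, by omega⟩
    · rintro ⟨n, m, h⟩; exact ⟨n, m, by omega⟩
  rw [hconv, pd_odd_iff]
  obtain ⟨q, r, hr, rfl⟩ : ∃ q r, r < 4 ∧ k = 4 * q + r := ⟨k / 4, k % 4, by omega, by omega⟩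
  interval_cases r
  · -- k = 4q : d odd, k+1 = 2(2q)+1 odd
    have e1 : thueMorse (4 * q + 0) = thueMorse (2 * q) := by
      rw [show 4 * q + 0 = 2 * (2 * q) by ring, tm_even]
    have e2 : thueMorse (4 * q + 0 + 1) = -thueMorse (2 * q) := by
      rw [show 4 * q + 0 + 1 = 2 * (2 * q) + 1 by ring, tm_odd]
    rw [e1, e2]
    constructor
    · intro _; exact ⟨2 * q, 0, by rw [pow_zero, mul_one]; omega⟩
    · intro _
      rcases tm_pm (2 * q) with h | h <;> rw [h] <;> decide
  · -- k = 4q+1 : d even, k+1 = 4q+2 not of the form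
    have e1 : thueMorse (4 * q + 1) = -thueMorse q := by
      rw [show 4 * q + 1 = 2 * (2 * q) + 1 by ring, tm_odd,
        tm_even]
    have e2 : thueMorse (4 * q + 1 + 1) = -thueMorse q := by
      rw [show 4 * q + 1 + 1 = 2 * (2 * q + 1) by ring, tm_even, tm_odd]
    rw [e1, e2]
    simp only [ne_eq, not_true_eq_false, false_iff]
    rintro ⟨n, m, h⟩
    rcases m with _ | m
    · rw [pow_zero, mul_one] at h; omega
    · rw [pow_succ, ← mul_assoc] at h; omega
  · -- k = 4q+2 : d odd
    have e1 : thueMorse (4 * q + 2) = thueMorse (2 * q + 1) := by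
      rw [show 4 * q + 2 = 2 * (2 * q + 1) by ring, tm_even]
    have e2 : thueMorse (4 * q + 2 + 1) = -thueMorse (2 * q + 1) := by
      rw [show 4 * q + 2 + 1 = 2 * (2 * q + 1) + 1 by ring, tm_odd]
    rw [e1, e2]
    constructor
    · intro _; exact ⟨2 * q + 1, 0, by rw [pow_zero, mul_one]; omega⟩
    · intro _
      rcases tm_pm (2 * q + 1) with h | h <;> rw [h] <;> decide
  · -- k = 4q+3 : recurse to q
    have e1 : thueMorse (4 * q + 3) = thueMorse q := by
      rw [show 4 * q + 3 = 2 * (2 * q + 1) + 1 by ring, tm_odd, tm_odd, neg_neg]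
    have e2 : thueMorse (4 * q + 3 + 1) = thueMorse (q + 1) := by
      rw [show 4 * q + 3 + 1 = 2 * (2 * (q + 1)) by ring, tm_even, tm_even]
    rw [e1, e2]
    have hih := ih q (by omega)
    rw [pd_odd_iff, hconv] at hih
    rw [hih]
    constructor
    · rintro ⟨n, m, h⟩
      exact ⟨n, m + 1, by rw [pow_succ, ← mul_assoc, h]; omega⟩
    · rintro ⟨n, m, h⟩
      rcases m with _ | m
      · rw [pow_zero, mul_one] at h; omega
      · rw [pow_succ, ← mul_assoc] at h
        exact ⟨n, m, by omega⟩
end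

section
/- A nonnegative integer m belongs to the set R = {(4k+1)*2^n - 1 : n, k nonnegative integers} if and only if the coefficient r_m of x^m in the power series sum_{n>=0} x^{2^n - 1}/(1 - x^{2^{n+2}}) equals 1; otherwise r_m = 0. Equivalently, r_m = number of pairs (n,k) of nonnegative integers with (4k+1)*2^n - 1 = m, and this number is at most 1. -/
/-- The regular paperfolding sequence: `r m` is the number of pairs `(n, k)`
of nonnegative integers with `(4k+1) * 2^n - 1 = m`, i.e., the coefficient of
`x^m` in `∑_{n ≥ 0} x^(2^n - 1) / (1 - x^(2^(n+2)))`. -/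
noncomputable def paperfolding (m : ℕ) : ℕ :=
  Nat.card {p : ℕ × ℕ // (4 * p.2 + 1) * 2 ^ p.1 - 1 = m}

lemma pf_uniq {n k n' k' : ℕ} (h : (4 * k + 1) * 2 ^ n = (4 * k' + 1) * 2 ^ n') :
    n = n' ∧ k = k' := by
  have hn : n = n' := by
    rcases le_or_gt n n' with hle | hlt
    · rcases Nat.exists_eq_add_of_le hle with ⟨d, rfl⟩
      have h2 : 4 * k + 1 = (4 * k' + 1) * 2 ^ d :=
        Nat.eq_of_mul_eq_mul_right (pow_pos two_pos n)
          (by rw [h, pow_add]; ring)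
      rcases Nat.eq_zero_or_pos d with rfl | hd
      · simp
      · exfalso
        have : (2 : ℕ) ∣ 4 * k + 1 := ⟨(4 * k' + 1) * 2 ^ (d - 1), by
          rw [h2]
          rcases Nat.exists_eq_add_of_le hd with ⟨e, rfl⟩
          rw [Nat.add_sub_cancel_left, pow_add, pow_one]
          ring⟩
        omega
    · exfalso
      rcases Nat.exists_eq_add_of_lt hlt with ⟨d, rfl⟩
      have h2 : (4 * k + 1) * 2 ^ (d + 1) = 4 * k' + 1 :=
        Nat.eq_of_mul_eq_mul_right (pow_pos two_pos n')
          (by rw [← h, pow_add]; ring)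
      have : (2 : ℕ) ∣ 4 * k' + 1 := ⟨(4 * k + 1) * 2 ^ d, by
        rw [← h2, pow_succ]; ring⟩
      omega
  subst hn
  have := Nat.eq_of_mul_eq_mul_right (pow_pos two_pos n) h
  omega

instance pf_sub (m : ℕ) : Subsingleton {p : ℕ × ℕ // (4 * p.2 + 1) * 2 ^ p.1 - 1 = m} := by
  constructor
  rintro ⟨⟨n, k⟩, h1⟩ ⟨⟨n', k'⟩, h2⟩
  dsimp only at h1 h2
  have hpos : ∀ a b : ℕ, 1 ≤ (4 * b + 1) * 2 ^ a := fun a b =>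
    Nat.one_le_iff_ne_zero.2 (by positivity)
  have heq : (4 * k + 1) * 2 ^ n = (4 * k' + 1) * 2 ^ n' := by
    have := hpos n k; have := hpos n' k'
    omega
  obtain ⟨rfl, rfl⟩ := pf_uniq heq
  rfl

theorem stmt_4 (m : ℕ) :
    ((∃ n k : ℕ, (4 * k + 1) * 2 ^ n - 1 = m) ↔ paperfolding m = 1) ∧
    ((¬ ∃ n k : ℕ, (4 * k + 1) * 2 ^ n - 1 = m) → paperfolding m = 0) ∧
    paperfolding m ≤ 1 := by
  have hiff : (∃ n k : ℕ, (4 * k + 1) * 2 ^ n - 1 = m) ↔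
      Nonempty {p : ℕ × ℕ // (4 * p.2 + 1) * 2 ^ p.1 - 1 = m} := by
    constructor
    · rintro ⟨n, k, h⟩; exact ⟨⟨(n, k), h⟩⟩
    · rintro ⟨⟨⟨n, k⟩, h⟩⟩; exact ⟨n, k, h⟩
  refine ⟨?_, ?_, ?_⟩
  · rw [hiff, paperfolding]
    constructor
    · intro hne
      have : Unique {p : ℕ × ℕ // (4 * p.2 + 1) * 2 ^ p.1 - 1 = m} :=
        uniqueOfSubsingleton hne.some
      exact Nat.card_unique
    · intro h
      exact Nat.card_pos_iff.mp (by omega) |>.1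
  · intro h
    rw [paperfolding, Nat.card_eq_zero]
    exact Or.inl (isEmpty_iff.mpr fun x => h (hiff.mpr ⟨x⟩))
  · rw [paperfolding]
    rcases isEmpty_or_nonempty {p : ℕ × ℕ // (4 * p.2 + 1) * 2 ^ p.1 - 1 = m} with he | hne
    · simp [Nat.card_eq_zero.mpr (Or.inl he)]
    · have : Unique {p : ℕ × ℕ // (4 * p.2 + 1) * 2 ^ p.1 - 1 = m} :=
        uniqueOfSubsingleton hne.some
      simp [Nat.card_unique]
end

section
/- For nonnegative integers c and d, c+d belongs to J = {(2n+1)*4^m - 1 : n,m >= 0} if and only if beta(c)+beta(d) belongs to L = N \ J*, where J* = {(2n+1)*4^m - 1 : n >= 0, m >= 1} and beta(l) = 2l if l is even, 2l+1 if l is odd. -/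
/-- `P = {k : k ≡ 0 or 3 (mod 4)}`. -/
def Pset : Set ℕ := {k | k % 4 = 0 ∨ k % 4 = 3}

/-- `Q = {k : k ≡ 1 or 2 (mod 4)}`. -/
def Qset : Set ℕ := {k | k % 4 = 1 ∨ k % 4 = 2}

/-- `J = {(2n+1)·4^j − 1 : n, j ≥ 0}`. -/
def Jset : Set ℕ := {m | ∃ n j : ℕ, (2 * n + 1) * 4 ^ j - 1 = m}

/-- `J* = {(2n+1)·4^j − 1 : n ≥ 0, j ≥ 1}`. -/
def Jstar : Set ℕ := {m | ∃ n j : ℕ, 1 ≤ j ∧ (2 * n + 1) * 4 ^ j - 1 = m}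

/-- `L = ℕ \ J*`. -/
def Lset : Set ℕ := Jstarᶜ

/-- `A|_m`: the finite set of the `m` smallest elements of `A`. -/
noncomputable def smallest (A : Set ℕ) (m : ℕ) : Finset ℕ :=
  (Finset.range m).image (Nat.nth (· ∈ A))

/-- The map `β`: `β l = 2l` if `l` even, `2l + 1` if `l` odd. -/
def beta (l : ℕ) : ℕ := if Even l then 2 * l else 2 * l + 1

/-- `μ(A, k, B)`: the number of involutions of the finite set `A` (permutations of `ℕ`
fixing everything outside `A` and equal to their own inverse) having exactly `k`
transpositions, all of whose transpositions `(c, d)` satisfy `c + d ∈ B`. -/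
noncomputable def mu (A : Finset ℕ) (k : ℕ) (B : Set ℕ) : ℕ :=
  Nat.card {σ : Equiv.Perm ℕ // σ * σ = 1 ∧ (∀ x, σ x ≠ x → x ∈ A) ∧
    (A.filter fun x => σ x ≠ x).card = 2 * k ∧ ∀ c, σ c ≠ c → c + σ c ∈ B}

lemma jmem (m : ℕ) : m ∈ Jset ↔ Even ((m+1).factorization 2) := by
  constructor
  · rintro ⟨n, j, h⟩
    have hpos : 1 ≤ (2*n+1) * 4^j := Nat.one_le_iff_ne_zero.mpr (by positivity)
    have hm : m + 1 = (2*n+1) * 4^j := by omega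
    have h4 : (4:ℕ)^j = 2^(2*j) := by rw [pow_mul]; norm_num
    rw [hm, h4, Nat.factorization_mul (by omega) (by positivity)]
    have h1 : (2*n+1).factorization 2 = 0 :=
      Nat.factorization_eq_zero_of_not_dvd (by omega)
    have h2 : ((2:ℕ)^(2*j)).factorization 2 = 2*j := by
      rw [Nat.Prime.factorization_pow Nat.prime_two]; simp
    simp [h1, h2, even_two_mul]
  · rintro ⟨j, hj⟩
    set e := (m+1).factorization 2 with he
    have hm : 2^e * ((m+1) / 2^e) = m+1 := Nat.ordProj_mul_ordCompl_eq_self (m+1) 2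
    have hodd : ¬ 2 ∣ ((m+1) / 2^e) := Nat.not_dvd_ordCompl Nat.prime_two (by omega)
    obtain ⟨n, hn⟩ : ∃ n, (m+1)/2^e = 2*n+1 := ⟨((m+1)/2^e)/2, by omega⟩
    refine ⟨n, j, ?_⟩
    have h4 : (4:ℕ)^j = 2^e := by rw [show e = 2*j by omega, pow_mul]; norm_num
    rw [h4, ← hn]
    have hm' : ((m+1)/2^e) * 2^e = m + 1 := by rw [mul_comm]; exact hm
    omega

lemma jstarmem (m : ℕ) : m ∈ Jstar ↔
    Even ((m+1).factorization 2) ∧ (m+1).factorization 2 ≠ 0 := by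
  constructor
  · rintro ⟨n, j, hj1, h⟩
    have hpos : 1 ≤ (2*n+1) * 4^j := Nat.one_le_iff_ne_zero.mpr (by positivity)
    have hm : m + 1 = (2*n+1) * 4^j := by omega
    have h4 : (4:ℕ)^j = 2^(2*j) := by rw [pow_mul]; norm_num
    rw [hm, h4, Nat.factorization_mul (by omega) (by positivity)]
    have h1 : (2*n+1).factorization 2 = 0 :=
      Nat.factorization_eq_zero_of_not_dvd (by omega)
    have h2 : ((2:ℕ)^(2*j)).factorization 2 = 2*j := by
      rw [Nat.Prime.factorization_pow Nat.prime_two]; simp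
    simp only [Finsupp.add_apply, h1, h2, zero_add]
    exact ⟨even_two_mul j, by omega⟩
  · rintro ⟨⟨j, hj⟩, hne⟩
    set e := (m+1).factorization 2 with he
    have hm : 2^e * ((m+1) / 2^e) = m+1 := Nat.ordProj_mul_ordCompl_eq_self (m+1) 2
    have hodd : ¬ 2 ∣ ((m+1) / 2^e) := Nat.not_dvd_ordCompl Nat.prime_two (by omega)
    obtain ⟨n, hn⟩ : ∃ n, (m+1)/2^e = 2*n+1 := ⟨((m+1)/2^e)/2, by omega⟩
    refine ⟨n, j, by omega, ?_⟩
    have h4 : (4:ℕ)^j = 2^e := by rw [show e = 2*j by omega, pow_mul]; norm_num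
    rw [h4, ← hn]
    have hm' : ((m+1)/2^e) * 2^e = m + 1 := by rw [mul_comm]; exact hm
    omega

theorem stmt_8 (c d : ℕ) : c + d ∈ Jset ↔ beta c + beta d ∈ Lset := by
  rw [jmem, show Lset = Jstarᶜ from rfl, Set.mem_compl_iff, jstarmem]
  unfold beta
  rcases Nat.even_or_odd c with hc | hc <;> rcases Nat.even_or_odd d with hd | hd
  · obtain ⟨a, ha⟩ := hc; obtain ⟨b, hb⟩ := hd
    rw [if_pos ⟨a, ha⟩, if_pos ⟨b, hb⟩]
    have h1 : (c+d+1).factorization 2 = 0 :=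
      Nat.factorization_eq_zero_of_not_dvd (by omega)
    have h2 : (2*c + 2*d + 1).factorization 2 = 0 :=
      Nat.factorization_eq_zero_of_not_dvd (by omega)
    simp [h1, h2]
  · -- c even, d odd
    obtain ⟨a, ha⟩ := hc; obtain ⟨b, hb⟩ := hd
    rw [if_pos ⟨a, ha⟩, if_neg (by simp [Nat.not_even_iff_odd]; exact ⟨b, hb⟩)]
    have key : (2*c + (2*d+1) + 1) = 2 * (c+d+1) := by ring
    rw [key, Nat.factorization_mul (by norm_num) (by omega)]
    have h2 : (2:ℕ).factorization 2 = 1 := Nat.Prime.factorization_self Nat.prime_two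
    have hdvd : 2 ∣ (c+d+1) := by omega
    have hpos : 0 < (c+d+1).factorization 2 :=
      Nat.Prime.factorization_pos_of_dvd Nat.prime_two (by omega) hdvd
    simp only [Finsupp.add_apply, h2]
    set f := (c+d+1).factorization 2
    rw [Nat.even_iff, Nat.even_iff]
    omega
  · -- c odd, d even
    obtain ⟨a, ha⟩ := hc; obtain ⟨b, hb⟩ := hd
    rw [if_neg (by simp [Nat.not_even_iff_odd]; exact ⟨a, ha⟩), if_pos ⟨b, hb⟩]
    have key : ((2*c+1) + 2*d + 1) = 2 * (c+d+1) := by ring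
    rw [key, Nat.factorization_mul (by norm_num) (by omega)]
    have h2 : (2:ℕ).factorization 2 = 1 := Nat.Prime.factorization_self Nat.prime_two
    have hdvd : 2 ∣ (c+d+1) := by omega
    have hpos : 0 < (c+d+1).factorization 2 :=
      Nat.Prime.factorization_pos_of_dvd Nat.prime_two (by omega) hdvd
    simp only [Finsupp.add_apply, h2]
    set f := (c+d+1).factorization 2
    rw [Nat.even_iff, Nat.even_iff]
    omega
  · obtain ⟨a, ha⟩ := hc; obtain ⟨b, hb⟩ := hd
    rw [if_neg (by simp [Nat.not_even_iff_odd]; exact ⟨a, ha⟩),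
        if_neg (by simp [Nat.not_even_iff_odd]; exact ⟨b, hb⟩)]
    have h1 : (c+d+1).factorization 2 = 0 :=
      Nat.factorization_eq_zero_of_not_dvd (by omega)
    have h2 : ((2*c+1) + (2*d+1) + 1).factorization 2 = 0 :=
      Nat.factorization_eq_zero_of_not_dvd (by omega)
    simp [h1, h2]
end

section
/- For all m >= 1 and k >= 0, μ(P|_m, k, J*) = μ(Q|_m, k, J*), where μ(A,k,B) counts involutions of A with exactly k transpositions, all transpositions (c,d) satisfying c+d ∈ B. -/
def gfun (x : ℕ) : ℕ := if x % 2 = 0 then x + 1 else x - 1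

lemma gfun_gfun (x : ℕ) : gfun (gfun x) = x := by
  unfold gfun; split_ifs <;> omega

instance : DecidablePred (· ∈ Pset) := fun n =>
  decidable_of_iff (n % 4 = 0 ∨ n % 4 = 3) Iff.rfl
instance : DecidablePred (· ∈ Qset) := fun n =>
  decidable_of_iff (n % 4 = 1 ∨ n % 4 = 2) Iff.rfl

lemma countP4 (t : ℕ) : Nat.count (· ∈ Pset) (4 * t) = 2 * t := by
  induction t with
  | zero => simp
  | succ t ih =>
    have e : 4 * (t + 1) = (4 * t) + 1 + 1 + 1 + 1 := by ring
    have h0 : (4 * t) ∈ Pset := by simp only [Pset, Set.mem_setOf_eq]; omega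
    have h1 : ¬ (4 * t + 1) ∈ Pset := by simp only [Pset, Set.mem_setOf_eq]; omega
    have h2 : ¬ (4 * t + 1 + 1) ∈ Pset := by simp only [Pset, Set.mem_setOf_eq]; omega
    have h3 : (4 * t + 1 + 1 + 1) ∈ Pset := by simp only [Pset, Set.mem_setOf_eq]; omega
    rw [e, Nat.count_succ, Nat.count_succ, Nat.count_succ, Nat.count_succ, ih,
      if_pos h0, if_neg h1, if_neg h2, if_pos h3]
    omega

lemma countP3 (t : ℕ) : Nat.count (· ∈ Pset) (4 * t + 3) = 2 * t + 1 := by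
  have h0 : (4 * t) ∈ Pset := by simp only [Pset, Set.mem_setOf_eq]; omega
  have h1 : ¬ (4 * t + 1) ∈ Pset := by simp only [Pset, Set.mem_setOf_eq]; omega
  have h2 : ¬ (4 * t + 1 + 1) ∈ Pset := by simp only [Pset, Set.mem_setOf_eq]; omega
  have e : 4 * t + 3 = (4 * t) + 1 + 1 + 1 := by ring
  rw [e, Nat.count_succ, Nat.count_succ, Nat.count_succ, countP4,
    if_pos h0, if_neg h1, if_neg h2]

lemma countQ4 (t : ℕ) : Nat.count (· ∈ Qset) (4 * t) = 2 * t := by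
  induction t with
  | zero => simp
  | succ t ih =>
    have e : 4 * (t + 1) = (4 * t) + 1 + 1 + 1 + 1 := by ring
    have h0 : ¬ (4 * t) ∈ Qset := by simp only [Qset, Set.mem_setOf_eq]; omega
    have h1 : (4 * t + 1) ∈ Qset := by simp only [Qset, Set.mem_setOf_eq]; omega
    have h2 : (4 * t + 1 + 1) ∈ Qset := by simp only [Qset, Set.mem_setOf_eq]; omega
    have h3 : ¬ (4 * t + 1 + 1 + 1) ∈ Qset := by simp only [Qset, Set.mem_setOf_eq]; omega
    rw [e, Nat.count_succ, Nat.count_succ, Nat.count_succ, Nat.count_succ, ih,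
      if_neg h0, if_pos h1, if_pos h2, if_neg h3]
    omega

lemma countQ1 (t : ℕ) : Nat.count (· ∈ Qset) (4 * t + 1) = 2 * t := by
  have h0 : ¬ (4 * t) ∈ Qset := by simp only [Qset, Set.mem_setOf_eq]; omega
  rw [Nat.count_succ, countQ4, if_neg h0]
  omega

lemma countQ2 (t : ℕ) : Nat.count (· ∈ Qset) (4 * t + 2) = 2 * t + 1 := by
  have h1 : (4 * t + 1) ∈ Qset := by simp only [Qset, Set.mem_setOf_eq]; omega
  have e : 4 * t + 2 = (4 * t + 1) + 1 := by ring
  rw [e, Nat.count_succ, countQ1, if_pos h1]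

lemma nthP (i : ℕ) : Nat.nth (· ∈ Pset) i = beta i := by
  rcases Nat.even_or_odd i with h | h
  · obtain ⟨t, ht⟩ := h
    have hi : i = 2 * t := by omega
    have hb : beta i = 4 * t := by
      rw [beta, if_pos ⟨t, ht⟩]; omega
    have hmem : (4 * t) ∈ Pset := by simp only [Pset, Set.mem_setOf_eq]; omega
    have := Nat.nth_count (p := (· ∈ Pset)) hmem
    rw [countP4] at this
    rw [hb, hi, this]
  · obtain ⟨t, ht⟩ := h
    have hb : beta i = 4 * t + 3 := by
      rw [beta, if_neg (by rw [Nat.not_even_iff_odd]; exact ⟨t, ht⟩)]; omega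
    have hmem : (4 * t + 3) ∈ Pset := by simp only [Pset, Set.mem_setOf_eq]; omega
    have := Nat.nth_count (p := (· ∈ Pset)) hmem
    rw [countP3] at this
    rw [hb, ht, this]

lemma nthQ (i : ℕ) : Nat.nth (· ∈ Qset) i = gfun (beta i) := by
  rcases Nat.even_or_odd i with h | h
  · obtain ⟨t, ht⟩ := h
    have hi : i = 2 * t := by omega
    have hb : gfun (beta i) = 4 * t + 1 := by
      rw [beta, if_pos ⟨t, ht⟩, gfun]
      split_ifs <;> omega
    have hmem : (4 * t + 1) ∈ Qset := by simp only [Qset, Set.mem_setOf_eq]; omega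
    have := Nat.nth_count (p := (· ∈ Qset)) hmem
    rw [countQ1] at this
    rw [hb, hi, this]
  · obtain ⟨t, ht⟩ := h
    have hb : gfun (beta i) = 4 * t + 2 := by
      rw [beta, if_neg (by rw [Nat.not_even_iff_odd]; exact ⟨t, ht⟩), gfun]
      split_ifs <;> omega
    have hmem : (4 * t + 2) ∈ Qset := by simp only [Qset, Set.mem_setOf_eq]; omega
    have := Nat.nth_count (p := (· ∈ Qset)) hmem
    rw [countQ2] at this
    rw [hb, ht, this]

lemma jstar_mod {x : ℕ} (hx : x ∈ Jstar) : x % 4 = 3 := by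
  obtain ⟨n, j, hj, hm⟩ := hx
  obtain ⟨j', rfl⟩ : ∃ j', j = j' + 1 := ⟨j - 1, by omega⟩
  have he : (2 * n + 1) * 4 ^ (j' + 1) = 4 * ((2 * n + 1) * 4 ^ j') := by ring
  have hge : 1 ≤ (2 * n + 1) * 4 ^ j' := Nat.one_le_iff_ne_zero.mpr (by positivity)
  rw [he] at hm
  omega

lemma sum_pres {a b : ℕ} (hab : a % 2 ≠ b % 2) (hs : a + b ∈ Jstar) :
    gfun a + gfun b ∈ Jstar := by
  have h : gfun a + gfun b = a + b := by unfold gfun; split_ifs <;> omega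
  rwa [h]

def G : Equiv.Perm ℕ := ⟨gfun, gfun, gfun_gfun, gfun_gfun⟩

lemma G_apply (x : ℕ) : G x = gfun x := rfl

lemma ginj : Function.Injective gfun :=
  Function.LeftInverse.injective gfun_gfun

lemma conjconj (σ : Equiv.Perm ℕ) : G * (G * σ * G) * G = σ := by
  ext x
  simp [Equiv.Perm.mul_apply, G_apply, gfun_gfun]

lemma mem_image_g {A : Finset ℕ} {x : ℕ} : x ∈ A.image gfun ↔ gfun x ∈ A := by
  simp only [Finset.mem_image]
  constructor
  · rintro ⟨a, ha, rfl⟩; rwa [gfun_gfun]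
  · intro h; exact ⟨gfun x, h, gfun_gfun x⟩

lemma cond_conj (A B : Finset ℕ) (k : ℕ)
    (hBA : B = A.image gfun)
    (hA : ∀ a b, a ∈ A → b ∈ A → a + b ∈ Jstar → gfun a + gfun b ∈ Jstar)
    (σ : Equiv.Perm ℕ)
    (h1 : σ * σ = 1) (h2 : ∀ x, σ x ≠ x → x ∈ A)
    (h3 : (A.filter fun x => σ x ≠ x).card = 2 * k)
    (h4 : ∀ c, σ c ≠ c → c + σ c ∈ Jstar) :
    (G * σ * G) * (G * σ * G) = 1 ∧ (∀ x, (G * σ * G) x ≠ x → x ∈ B) ∧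
      (B.filter fun x => (G * σ * G) x ≠ x).card = 2 * k ∧
      ∀ c, (G * σ * G) c ≠ c → c + (G * σ * G) c ∈ Jstar := by
  have hσ : ∀ y, σ (σ y) = y := fun y => by
    rw [← Equiv.Perm.mul_apply, h1, Equiv.Perm.one_apply]
  have τ_apply : ∀ x, (G * σ * G) x = gfun (σ (gfun x)) := fun x => by
    simp [Equiv.Perm.mul_apply, G_apply]
  have hmove : ∀ x, (G * σ * G) x ≠ x → σ (gfun x) ≠ gfun x := by
    intro x hx h
    exact hx (by rw [τ_apply, h, gfun_gfun])
  refine ⟨?_, ?_, ?_, ?_⟩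
  · ext x
    simp only [Equiv.Perm.mul_apply, G_apply, Equiv.Perm.one_apply, gfun_gfun, hσ]
  · intro x hx
    rw [hBA, mem_image_g]
    exact h2 _ (hmove x hx)
  · have himg : B.filter (fun x => (G * σ * G) x ≠ x)
        = (A.filter fun x => σ x ≠ x).image gfun := by
      ext x
      rw [Finset.mem_filter, hBA, mem_image_g, mem_image_g, Finset.mem_filter]
      constructor
      · rintro ⟨hx, hne⟩
        exact ⟨hx, hmove x hne⟩
      · rintro ⟨hx, hne⟩
        refine ⟨hx, fun h => hne (ginj ?_)⟩
        rw [← τ_apply x, h, gfun_gfun]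
    rw [himg, Finset.card_image_of_injective _ ginj, h3]
  · intro c hc
    have hgc := hmove c hc
    have haA := h2 _ hgc
    have hσa : σ (gfun c) ∈ A := h2 _ (by rw [hσ]; exact Ne.symm hgc)
    have hsum := h4 _ hgc
    have := hA _ _ haA hσa hsum
    rw [gfun_gfun] at this
    rwa [τ_apply]

lemma mu_conj (A B : Finset ℕ) (k : ℕ)
    (hBA : B = A.image gfun) (hAB : A = B.image gfun)
    (hA : ∀ a b, a ∈ A → b ∈ A → a + b ∈ Jstar → gfun a + gfun b ∈ Jstar)
    (hB : ∀ a b, a ∈ B → b ∈ B → a + b ∈ Jstar → gfun a + gfun b ∈ Jstar) :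
    mu A k Jstar = mu B k Jstar := by
  unfold mu
  apply Nat.card_congr
  exact
    { toFun := fun s =>
        ⟨G * s.1 * G, cond_conj A B k hBA hA s.1 s.2.1 s.2.2.1 s.2.2.2.1 s.2.2.2.2⟩
      invFun := fun s =>
        ⟨G * s.1 * G, cond_conj B A k hAB hB s.1 s.2.1 s.2.2.1 s.2.2.2.1 s.2.2.2.2⟩
      left_inv := fun s => Subtype.ext (conjconj s.1)
      right_inv := fun s => Subtype.ext (conjconj s.1) }

lemma betaP (i : ℕ) : beta i ∈ Pset := by
  rcases Nat.even_or_odd i with h | h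
  · obtain ⟨t, ht⟩ := h
    rw [beta, if_pos ⟨t, ht⟩]
    simp only [Pset, Set.mem_setOf_eq]; omega
  · obtain ⟨t, ht⟩ := h
    rw [beta, if_neg (by rw [Nat.not_even_iff_odd]; exact ⟨t, ht⟩)]
    simp only [Pset, Set.mem_setOf_eq]; omega

lemma gbetaQ (i : ℕ) : gfun (beta i) ∈ Qset := by
  rcases Nat.even_or_odd i with h | h
  · obtain ⟨t, ht⟩ := h
    rw [beta, if_pos ⟨t, ht⟩, gfun]
    simp only [Qset, Set.mem_setOf_eq]
    split_ifs <;> omega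
  · obtain ⟨t, ht⟩ := h
    rw [beta, if_neg (by rw [Nat.not_even_iff_odd]; exact ⟨t, ht⟩), gfun]
    simp only [Qset, Set.mem_setOf_eq]
    split_ifs <;> omega

lemma smallestP (m : ℕ) : smallest Pset m = (Finset.range m).image beta := by
  unfold smallest
  exact Finset.image_congr fun x _ => nthP x

lemma smallestQ (m : ℕ) :
    smallest Qset m = (Finset.range m).image (fun i => gfun (beta i)) := by
  unfold smallest
  exact Finset.image_congr fun x _ => nthQ x

theorem stmt_10 (m k : ℕ) (hm : 1 ≤ m) :
    mu (smallest Pset m) k Jstar = mu (smallest Qset m) k Jstar := by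
  have hBA : smallest Qset m = (smallest Pset m).image gfun := by
    rw [smallestP, smallestQ, Finset.image_image]
    rfl
  have hAB : smallest Pset m = (smallest Qset m).image gfun := by
    rw [hBA, Finset.image_image]
    have : (gfun ∘ gfun) = id := funext gfun_gfun
    rw [this, Finset.image_id]
  have hmemP : ∀ a ∈ smallest Pset m, a ∈ Pset := by
    intro a ha
    rw [smallestP] at ha
    obtain ⟨i, -, rfl⟩ := Finset.mem_image.mp ha
    exact betaP i
  have hmemQ : ∀ a ∈ smallest Qset m, a ∈ Qset := by
    intro a ha
    rw [smallestQ] at ha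
    obtain ⟨i, -, rfl⟩ := Finset.mem_image.mp ha
    exact gbetaQ i
  apply mu_conj
  · exact hBA
  · exact hAB
  · intro a b ha hb hs
    have ha' := hmemP a ha
    have hb' := hmemP b hb
    simp only [Pset, Set.mem_setOf_eq] at ha' hb'
    have h3 := jstar_mod hs
    exact sum_pres (by omega) hs
  · intro a b ha hb hs
    have ha' := hmemQ a ha
    have hb' := hmemQ b hb
    simp only [Qset, Set.mem_setOf_eq] at ha' hb'
    have h3 := jstar_mod hs
    exact sum_pres (by omega) hs
end

section
/- For all m >= 1 and k >= 1, sum_{i=0}^{k} μ(P|_m, i, J*) * binom(m-2i, 2k-2i) ≡ μ(P|_m, k, L) (mod 2). -/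
/-! ### Auxiliary matching machinery -/

section MatchAux

open Finset

open scoped Classical

/-- The collection of `k`-matchings on `A` whose pair-sums lie in `B`. -/
noncomputable def matchF (A : Finset ℕ) (k : ℕ) (B : Set ℕ) : Finset (Finset (ℕ × ℕ)) :=
  ((A ×ˢ A).powerset).filter fun M =>
    (∀ p ∈ M, p.1 < p.2 ∧ p.1 + p.2 ∈ B) ∧
    (∀ p ∈ M, ∀ q ∈ M, p ≠ q → p.1 ≠ q.1 ∧ p.1 ≠ q.2 ∧ p.2 ≠ q.1 ∧ p.2 ≠ q.2) ∧
    M.card = k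

/-- Support of a matching. -/
def msupp (M : Finset (ℕ × ℕ)) : Finset ℕ := M.biUnion fun p => {p.1, p.2}

lemma mem_msupp {M : Finset (ℕ × ℕ)} {x : ℕ} :
    x ∈ msupp M ↔ ∃ p ∈ M, x = p.1 ∨ x = p.2 := by
  simp [msupp]

lemma mem_matchF {A : Finset ℕ} {k : ℕ} {B : Set ℕ} {M : Finset (ℕ × ℕ)} :
    M ∈ matchF A k B ↔
      (∀ p ∈ M, p.1 ∈ A ∧ p.2 ∈ A) ∧
      (∀ p ∈ M, p.1 < p.2 ∧ p.1 + p.2 ∈ B) ∧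
      (∀ p ∈ M, ∀ q ∈ M, p ≠ q → p.1 ≠ q.1 ∧ p.1 ≠ q.2 ∧ p.2 ≠ q.1 ∧ p.2 ≠ q.2) ∧
      M.card = k := by
  simp only [matchF, Finset.mem_filter, Finset.mem_powerset]
  constructor
  · rintro ⟨hsub, h1, h2, h3⟩
    exact ⟨fun p hp => Finset.mem_product.1 (hsub hp), h1, h2, h3⟩
  · rintro ⟨h0, h1, h2, h3⟩
    exact ⟨fun p hp => Finset.mem_product.2 (h0 p hp), h1, h2, h3⟩

lemma card_msupp {M : Finset (ℕ × ℕ)}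
    (hlt : ∀ p ∈ M, p.1 < p.2)
    (hdisj : ∀ p ∈ M, ∀ q ∈ M, p ≠ q → p.1 ≠ q.1 ∧ p.1 ≠ q.2 ∧ p.2 ≠ q.1 ∧ p.2 ≠ q.2) :
    (msupp M).card = 2 * M.card := by
  rw [msupp, Finset.card_biUnion]
  · rw [Finset.sum_congr rfl (fun p hp => Finset.card_pair (Nat.ne_of_lt (hlt p hp)))]
    rw [Finset.sum_const, smul_eq_mul, mul_comm]
  · intro p hp q hq hne
    have h4 := hdisj p hp q hq hne
    simp only [Finset.disjoint_left, Finset.mem_insert, Finset.mem_singleton]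
    rintro a ha hb
    rcases ha with rfl | rfl <;> rcases hb with h | h <;> omega

/-- The partner function of a matching. -/
noncomputable def mperm (M : Finset (ℕ × ℕ)) (x : ℕ) : ℕ :=
  if h : ∃ p : ℕ × ℕ, p ∈ M ∧ (p.1 = x ∨ p.2 = x) then
    (if h.choose.1 = x then h.choose.2 else h.choose.1)
  else x

lemma mperm_fst {M : Finset (ℕ × ℕ)}
    (hdisj : ∀ p ∈ M, ∀ q ∈ M, p ≠ q → p.1 ≠ q.1 ∧ p.1 ≠ q.2 ∧ p.2 ≠ q.1 ∧ p.2 ≠ q.2)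
    {p : ℕ × ℕ} (hp : p ∈ M) : mperm M p.1 = p.2 := by
  have h : ∃ q : ℕ × ℕ, q ∈ M ∧ (q.1 = p.1 ∨ q.2 = p.1) := ⟨p, hp, Or.inl rfl⟩
  rw [mperm, dif_pos h]
  obtain ⟨hcM, hcx⟩ := h.choose_spec
  have hcp : h.choose = p := by
    by_contra hne
    have h4 := hdisj _ hcM _ hp hne
    rcases hcx with h1 | h1 <;> omega
  rw [hcp, if_pos rfl]

lemma mperm_snd {M : Finset (ℕ × ℕ)}
    (hlt : ∀ p ∈ M, p.1 < p.2)
    (hdisj : ∀ p ∈ M, ∀ q ∈ M, p ≠ q → p.1 ≠ q.1 ∧ p.1 ≠ q.2 ∧ p.2 ≠ q.1 ∧ p.2 ≠ q.2)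
    {p : ℕ × ℕ} (hp : p ∈ M) : mperm M p.2 = p.1 := by
  have h : ∃ q : ℕ × ℕ, q ∈ M ∧ (q.1 = p.2 ∨ q.2 = p.2) := ⟨p, hp, Or.inr rfl⟩
  rw [mperm, dif_pos h]
  obtain ⟨hcM, hcx⟩ := h.choose_spec
  have hcp : h.choose = p := by
    by_contra hne
    have h4 := hdisj _ hcM _ hp hne
    rcases hcx with h1 | h1 <;> omega
  have hne12 : p.1 ≠ p.2 := Nat.ne_of_lt (hlt p hp)
  rw [hcp, if_neg hne12]

lemma mperm_notMem {M : Finset (ℕ × ℕ)} {x : ℕ} (hx : x ∉ msupp M) : mperm M x = x := by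
  rw [mperm, dif_neg]
  rintro ⟨p, hp, h⟩
  rcases h with h | h
  · exact hx (mem_msupp.2 ⟨p, hp, Or.inl h.symm⟩)
  · exact hx (mem_msupp.2 ⟨p, hp, Or.inr h.symm⟩)

lemma mperm_cases {M : Finset (ℕ × ℕ)} {x : ℕ} (hx : mperm M x ≠ x) :
    ∃ p ∈ M, (p.1 = x ∧ mperm M x = p.2) ∨ (p.2 = x ∧ mperm M x = p.1) := by
  by_cases hex : ∃ p : ℕ × ℕ, p ∈ M ∧ (p.1 = x ∨ p.2 = x)
  · obtain ⟨hpM, hpx⟩ := hex.choose_spec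
    refine ⟨hex.choose, hpM, ?_⟩
    by_cases h1 : hex.choose.1 = x
    · exact Or.inl ⟨h1, by rw [mperm, dif_pos hex, if_pos h1]⟩
    · exact Or.inr ⟨hpx.resolve_left h1, by rw [mperm, dif_pos hex, if_neg h1]⟩
  · exact absurd (by rw [mperm, dif_neg hex]) hx

lemma mperm_involutive {M : Finset (ℕ × ℕ)}
    (hlt : ∀ p ∈ M, p.1 < p.2)
    (hdisj : ∀ p ∈ M, ∀ q ∈ M, p ≠ q → p.1 ≠ q.1 ∧ p.1 ≠ q.2 ∧ p.2 ≠ q.1 ∧ p.2 ≠ q.2) :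
    Function.Involutive (mperm M) := by
  intro x
  by_cases hx : x ∈ msupp M
  · obtain ⟨p, hp, h⟩ := mem_msupp.1 hx
    rcases h with rfl | rfl
    · rw [mperm_fst hdisj hp, mperm_snd hlt hdisj hp]
    · rw [mperm_snd hlt hdisj hp, mperm_fst hdisj hp]
  · rw [mperm_notMem hx, mperm_notMem hx]

/-- The matching associated to a permutation. -/
def permMatch (σ : Equiv.Perm ℕ) (A : Finset ℕ) : Finset (ℕ × ℕ) :=
  (A ×ˢ A).filter fun p => σ p.1 = p.2 ∧ p.1 < p.2

lemma filter_support_eq (σ : Equiv.Perm ℕ) (A : Finset ℕ)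
    (hinv : ∀ x, σ (σ x) = x) (hsupp : ∀ x, σ x ≠ x → x ∈ A) :
    (A.filter fun x => σ x ≠ x) = msupp (permMatch σ A) := by
  ext x
  simp only [Finset.mem_filter, mem_msupp]
  constructor
  · rintro ⟨hxA, hx⟩
    rcases Nat.lt_or_ge x (σ x) with hlt | hge
    · refine ⟨(x, σ x), ?_, Or.inl rfl⟩
      exact Finset.mem_filter.2 ⟨Finset.mem_product.2
        ⟨hxA, hsupp (σ x) (by rw [hinv]; exact Ne.symm hx)⟩, rfl, hlt⟩
    · have hlt2 : σ x < x := by omega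
      refine ⟨(σ x, x), ?_, Or.inr rfl⟩
      simp only [permMatch, Finset.mem_filter, Finset.mem_product]
      exact ⟨⟨hsupp (σ x) (by rw [hinv]; exact Ne.symm hx), hxA⟩, hinv x, hlt2⟩
  · rintro ⟨p, hp, hx⟩
    simp only [permMatch, Finset.mem_filter, Finset.mem_product] at hp
    obtain ⟨⟨h1A, h2A⟩, hσ, hlt⟩ := hp
    rcases hx with rfl | rfl
    · exact ⟨h1A, by rw [hσ]; omega⟩
    · refine ⟨h2A, ?_⟩
      have h2 : σ p.2 = p.1 := by rw [← hσ, hinv]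
      rw [h2]; omega

lemma permMatch_mem {A : Finset ℕ} {k : ℕ} {B : Set ℕ} (σ : Equiv.Perm ℕ)
    (hinv : ∀ x, σ (σ x) = x) (hsupp : ∀ x, σ x ≠ x → x ∈ A)
    (hcard : (A.filter fun x => σ x ≠ x).card = 2 * k)
    (hsum : ∀ c, σ c ≠ c → c + σ c ∈ B) :
    permMatch σ A ∈ matchF A k B := by
  have hd : ∀ p ∈ permMatch σ A, ∀ q ∈ permMatch σ A, p ≠ q →
      p.1 ≠ q.1 ∧ p.1 ≠ q.2 ∧ p.2 ≠ q.1 ∧ p.2 ≠ q.2 := by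
    intro p hp q hq hne
    simp only [permMatch, Finset.mem_filter, Finset.mem_product] at hp hq
    obtain ⟨-, hσp, hltp⟩ := hp
    obtain ⟨-, hσq, hltq⟩ := hq
    have hp2 : σ p.2 = p.1 := by rw [← hσp, hinv]
    have hq2 : σ q.2 = q.1 := by rw [← hσq, hinv]
    refine ⟨fun h => hne ?_, fun h => ?_, fun h => ?_, fun h => hne ?_⟩
    · have h2 : p.2 = q.2 := by rw [← hσp, ← hσq, h]
      exact Prod.ext h h2
    · have h2 : p.2 = q.1 := by rw [← hσp, h, hq2]
      omega
    · have h2 : p.1 = q.2 := by rw [← hp2, h, hσq]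
      omega
    · have h2 : p.1 = q.1 := by rw [← hp2, ← hq2, h]
      exact Prod.ext h2 h
  have hlt : ∀ p ∈ permMatch σ A, p.1 < p.2 ∧ p.1 + p.2 ∈ B := by
    intro p hp
    simp only [permMatch, Finset.mem_filter, Finset.mem_product] at hp
    obtain ⟨-, hσp, hltp⟩ := hp
    refine ⟨hltp, ?_⟩
    have h3 := hsum p.1 (by rw [hσp]; omega)
    rwa [hσp] at h3
  refine mem_matchF.2 ⟨?_, hlt, hd, ?_⟩
  · intro p hp
    simp only [permMatch, Finset.mem_filter, Finset.mem_product] at hp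
    exact hp.1
  · have h1 := filter_support_eq σ A hinv hsupp
    rw [h1] at hcard
    rw [card_msupp (fun p hp => (hlt p hp).1) hd] at hcard
    omega

lemma permMatch_inj {A : Finset ℕ} {σ τ : Equiv.Perm ℕ}
    (hinvσ : ∀ x, σ (σ x) = x) (hinvτ : ∀ x, τ (τ x) = x)
    (hsσ : ∀ x, σ x ≠ x → x ∈ A) (hsτ : ∀ x, τ x ≠ x → x ∈ A)
    (h : permMatch σ A = permMatch τ A) : σ = τ := by
  have main : ∀ σ' τ' : Equiv.Perm ℕ, (∀ x, σ' (σ' x) = x) → (∀ x, σ' x ≠ x → x ∈ A) →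
      (∀ x, τ' (τ' x) = x) → permMatch σ' A = permMatch τ' A →
      ∀ x, σ' x ≠ x → τ' x = σ' x := by
    intro σ' τ' hinv' hs' hinvτ' heq x hx
    rcases Nat.lt_or_ge x (σ' x) with hlt | hge
    · have hmem : (x, σ' x) ∈ permMatch σ' A := by
        exact Finset.mem_filter.2 ⟨Finset.mem_product.2
          ⟨hs' x hx, hs' (σ' x) (by rw [hinv']; exact Ne.symm hx)⟩, rfl, hlt⟩
      rw [heq] at hmem
      simp only [permMatch, Finset.mem_filter, Finset.mem_product] at hmem
      exact hmem.2.1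
    · have hlt2 : σ' x < x := by omega
      have hmem : (σ' x, x) ∈ permMatch σ' A := by
        simp only [permMatch, Finset.mem_filter, Finset.mem_product]
        exact ⟨⟨hs' (σ' x) (by rw [hinv']; exact Ne.symm hx), hs' x hx⟩, hinv' x, hlt2⟩
      rw [heq] at hmem
      simp only [permMatch, Finset.mem_filter, Finset.mem_product] at hmem
      have h2 : τ' (σ' x) = x := hmem.2.1
      calc τ' x = τ' (τ' (σ' x)) := by rw [h2]
      _ = σ' x := hinvτ' _
  ext x
  by_cases hσx : σ x = x
  · by_contra hτx
    have hne : τ x ≠ x := fun hh => hτx (by rw [hσx, hh])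
    exact hτx (main τ σ hinvτ hsτ hinvσ h.symm x hne)
  · rw [main σ τ hinvσ hsσ hinvτ h x hσx]

lemma mu_eq_card_matchF (A : Finset ℕ) (k : ℕ) (B : Set ℕ) :
    mu A k B = (matchF A k B).card := by
  have hinv_of : ∀ σ : Equiv.Perm ℕ, σ * σ = 1 → ∀ x, σ (σ x) = x := by
    intro σ h x
    have h2 := congrArg (fun τ : Equiv.Perm ℕ => τ x) h
    simpa using h2
  unfold mu
  rw [← Nat.card_eq_finsetCard]
  apply Nat.card_congr
  refine Equiv.ofBijective
    (fun σ => ⟨permMatch σ.1 A,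
      permMatch_mem σ.1 (hinv_of σ.1 σ.2.1) σ.2.2.1 σ.2.2.2.1 σ.2.2.2.2⟩) ⟨?_, ?_⟩
  · rintro σ τ hST
    have h := congrArg Subtype.val hST
    simp only at h
    exact Subtype.ext
      (permMatch_inj (hinv_of σ.1 σ.2.1) (hinv_of τ.1 τ.2.1) σ.2.2.1 τ.2.2.1 h)
  · rintro ⟨M, hM⟩
    obtain ⟨hmemA, hlts, hdisj, hcard⟩ := mem_matchF.1 hM
    have hlt : ∀ p ∈ M, p.1 < p.2 := fun p hp => (hlts p hp).1
    have hinvol : Function.Involutive (mperm M) := mperm_involutive hlt hdisj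
    set σ : Equiv.Perm ℕ := Function.Involutive.toPerm (mperm M) hinvol with hσdef
    have hσ : ∀ x, σ x = mperm M x := fun _ => rfl
    have hPM : permMatch σ A = M := by
      ext p
      simp only [permMatch, Finset.mem_filter, Finset.mem_product, hσ]
      constructor
      · rintro ⟨⟨h1, h2⟩, hs, hlt12⟩
        have hne : mperm M p.1 ≠ p.1 := by rw [hs]; omega
        obtain ⟨q, hq, hcase⟩ := mperm_cases hne
        rcases hcase with ⟨hq1, hq2⟩ | ⟨hq1, hq2⟩
        · have hp2 : p.2 = q.2 := by rw [← hs, hq2]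
          have hpq : p = q := Prod.ext hq1.symm hp2
          rwa [hpq]
        · have hp2 : p.2 = q.1 := by rw [← hs, hq2]
          have := hlt q hq
          omega
      · intro hp
        exact ⟨⟨(hmemA p hp).1, (hmemA p hp).2⟩, mperm_fst hdisj hp, hlt p hp⟩
    have hsupp : ∀ x, σ x ≠ x → x ∈ A := by
      intro x hx
      rw [hσ] at hx
      obtain ⟨q, hq, hcase⟩ := mperm_cases hx
      rcases hcase with ⟨hq1, -⟩ | ⟨hq1, -⟩
      · rw [← hq1]; exact (hmemA q hq).1
      · rw [← hq1]; exact (hmemA q hq).2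
    refine ⟨⟨σ, ?_, hsupp, ?_, ?_⟩, ?_⟩
    · ext x
      simp only [Equiv.Perm.mul_apply, Equiv.Perm.one_apply, hσ]
      exact hinvol x
    · rw [filter_support_eq σ A (fun x => hinvol x) hsupp, hPM,
        card_msupp hlt hdisj, hcard]
    · intro c hc
      rw [hσ] at hc ⊢
      obtain ⟨q, hq, hcase⟩ := mperm_cases hc
      rcases hcase with ⟨hq1, hq2⟩ | ⟨hq1, hq2⟩
      · rw [hq2, ← hq1]
        exact (hlts q hq).2
      · rw [hq2, ← hq1, Nat.add_comm]
        exact (hlts q hq).2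
    · exact Subtype.ext hPM

lemma matchF_zero (A : Finset ℕ) (B : Set ℕ) : matchF A 0 B = {∅} := by
  ext M
  simp only [mem_matchF, Finset.mem_singleton]
  constructor
  · rintro ⟨-, -, -, hc⟩
    exact Finset.card_eq_zero.1 hc
  · rintro rfl
    refine ⟨?_, ?_, ?_, rfl⟩ <;> intro p hp <;> simp at hp

lemma choose_arith (nn r' : ℕ) :
    (((nn + 1).choose (2 * (r' + 1)) : ℕ) : ZMod 2)
      = ((nn.choose (2 * (r' + 1)) : ℕ) : ZMod 2)
        + (nn : ZMod 2) * (((nn - 1).choose (2 * r') : ℕ) : ZMod 2) := by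
  rcases nn with _ | t
  · have h1 : Nat.choose 1 (2 * (r' + 1)) = 0 := Nat.choose_eq_zero_of_lt (by omega)
    have h0 : Nat.choose 0 (2 * (r' + 1)) = 0 := Nat.choose_eq_zero_of_lt (by omega)
    simp [h1, h0]
  · have pascal : (t + 1 + 1).choose (2 * r' + 2)
        = (t + 1).choose (2 * r' + 1) + (t + 1).choose (2 * r' + 2) :=
      Nat.choose_succ_succ (t + 1) (2 * r' + 1)
    have hmul : (t + 1) * Nat.choose t (2 * r')
        = Nat.choose (t + 1) (2 * r' + 1) * (2 * r' + 1) :=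
      Nat.add_one_mul_choose_eq t (2 * r')
    have h2 : 2 * (r' + 1) = 2 * r' + 2 := by ring
    have hsimp : (t + 1 : ℕ) - 1 = t := by omega
    rw [h2, hsimp, pascal]
    have hmulc : ((t : ZMod 2) + 1) * ((Nat.choose t (2 * r') : ℕ) : ZMod 2)
        = (((t + 1).choose (2 * r' + 1) : ℕ) : ZMod 2) := by
      have h1 := congrArg (fun x : ℕ => (x : ZMod 2)) hmul
      push_cast at h1
      rw [h1, show (2 : ZMod 2) = 0 from by decide]
      ring
    push_cast
    rw [← hmulc]
    ring

lemma msupp_subset {A : Finset ℕ} {r : ℕ} {B : Set ℕ} {M : Finset (ℕ × ℕ)}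
    (h : M ∈ matchF A r B) : msupp M ⊆ A := by
  intro x hx
  obtain ⟨p, hp, hc⟩ := mem_msupp.1 hx
  have h1 := (mem_matchF.1 h).1 p hp
  rcases hc with rfl | rfl
  · exact h1.1
  · exact h1.2

lemma part2 : ∀ (n : ℕ) (A : Finset ℕ), A.card = n → ∀ r : ℕ,
    ((matchF A r Set.univ).card : ZMod 2) = ((n.choose (2 * r) : ℕ) : ZMod 2) := by
  intro n
  induction n using Nat.strong_induction_on with
  | _ n ih =>
    intro A hA r
    match r with
    | 0 =>
      rw [matchF_zero]
      simp
    | r' + 1 =>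
      rcases A.eq_empty_or_nonempty with rfl | hne
      · have hn : n = 0 := by simpa using hA.symm
        subst hn
        have hempty : matchF (∅ : Finset ℕ) (r' + 1) Set.univ = ∅ := by
          rw [Finset.eq_empty_iff_forall_notMem]
          intro M hM
          obtain ⟨h1, h2, h3, h4⟩ := mem_matchF.1 hM
          have hM0 : M = ∅ := by
            rw [Finset.eq_empty_iff_forall_notMem]
            intro p hp
            have := (h1 p hp).1
            simp at this
          rw [hM0] at h4
          simp at h4
        rw [hempty, Nat.choose_eq_zero_of_lt (by omega)]
        simp
      · obtain ⟨nn, rfl⟩ : ∃ nn, n = nn + 1 := by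
          refine ⟨n - 1, ?_⟩
          have : 0 < A.card := Finset.card_pos.2 hne
          omega
        set a := A.max' hne with ha
        have haA : a ∈ A := A.max'_mem hne
        have hA' : (A.erase a).card = nn := by
          rw [Finset.card_erase_of_mem haA, hA]
          omega
        have key0 : ((matchF A (r' + 1) Set.univ).filter fun M => ¬ a ∈ msupp M)
            = matchF (A.erase a) (r' + 1) Set.univ := by
          ext M
          simp only [Finset.mem_filter, mem_matchF]
          constructor
          · rintro ⟨⟨h1, h2, h3, h4⟩, h5⟩
            refine ⟨fun p hp => ?_, h2, h3, h4⟩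
            have hne1 : p.1 ≠ a := fun h => h5 (mem_msupp.2 ⟨p, hp, Or.inl h.symm⟩)
            have hne2 : p.2 ≠ a := fun h => h5 (mem_msupp.2 ⟨p, hp, Or.inr h.symm⟩)
            exact ⟨Finset.mem_erase.2 ⟨hne1, (h1 p hp).1⟩,
              Finset.mem_erase.2 ⟨hne2, (h1 p hp).2⟩⟩
          · rintro ⟨h1, h2, h3, h4⟩
            refine ⟨⟨fun p hp => ⟨Finset.mem_of_mem_erase (h1 p hp).1,
              Finset.mem_of_mem_erase (h1 p hp).2⟩, h2, h3, h4⟩, ?_⟩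
            intro hmem
            obtain ⟨p, hp, hx⟩ := mem_msupp.1 hmem
            rcases hx with h | h
            · exact (Finset.mem_erase.1 (h1 p hp).1).1 h.symm
            · exact (Finset.mem_erase.1 (h1 p hp).2).1 h.symm
        have key1 : ((matchF A (r' + 1) Set.univ).filter fun M => a ∈ msupp M).card
            = ((A.erase a).sigma fun b => matchF ((A.erase a).erase b) r' Set.univ).card := by
          refine (Finset.card_bij (fun x _ => insert (x.1, a) x.2) ?_ ?_ ?_).symm
          · rintro ⟨b, M⟩ hx
            rw [Finset.mem_sigma] at hx
            obtain ⟨hb, hM⟩ := hx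
            obtain ⟨h1, h2, h3, h4⟩ := mem_matchF.1 hM
            obtain ⟨hbne, hbA⟩ := Finset.mem_erase.1 hb
            have hba : b < a := lt_of_le_of_ne (Finset.le_max' A b hbA) hbne
            have hq : ∀ q ∈ M, q.1 ∈ A ∧ q.2 ∈ A ∧ q.1 ≠ a ∧ q.2 ≠ a ∧ q.1 ≠ b ∧ q.2 ≠ b := by
              intro q hqM
              obtain ⟨hq1, hq2⟩ := h1 q hqM
              obtain ⟨hq1b, hq1'⟩ := Finset.mem_erase.1 hq1
              obtain ⟨hq1a, hq1A⟩ := Finset.mem_erase.1 hq1'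
              obtain ⟨hq2b, hq2'⟩ := Finset.mem_erase.1 hq2
              obtain ⟨hq2a, hq2A⟩ := Finset.mem_erase.1 hq2'
              exact ⟨hq1A, hq2A, hq1a, hq2a, hq1b, hq2b⟩
            have hnotmem : (b, a) ∉ M := fun h => ((hq _ h).2.2.2.1) rfl
            rw [Finset.mem_filter]
            constructor
            · rw [mem_matchF]
              refine ⟨?_, ?_, ?_, ?_⟩
              · intro p hp
                rcases Finset.mem_insert.1 hp with rfl | hp'
                · exact ⟨hbA, haA⟩
                · exact ⟨(hq p hp').1, (hq p hp').2.1⟩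
              · intro p hp
                rcases Finset.mem_insert.1 hp with rfl | hp'
                · exact ⟨hba, Set.mem_univ _⟩
                · exact h2 p hp'
              · intro p hp q hqq hpq
                rcases Finset.mem_insert.1 hp with rfl | hp' <;>
                  rcases Finset.mem_insert.1 hqq with rfl | hq'
                · exact absurd rfl hpq
                · have := hq q hq'
                  refine ⟨?_, ?_, ?_, ?_⟩ <;> dsimp only <;> omega
                · have := hq p hp'
                  refine ⟨?_, ?_, ?_, ?_⟩ <;> dsimp only <;> omega
                · exact h3 p hp' q hq' hpq
              · rw [Finset.card_insert_of_notMem hnotmem, h4]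
            · exact mem_msupp.2 ⟨(b, a), Finset.mem_insert_self _ _, Or.inr rfl⟩
          · rintro ⟨b, M⟩ hx ⟨c, N⟩ hy heq
            rw [Finset.mem_sigma] at hx hy
            dsimp only at heq hx hy
            obtain ⟨hb, hM⟩ := hx
            obtain ⟨hc, hN⟩ := hy
            have hanotM : a ∉ msupp M := fun hmem => by
              have := msupp_subset hM hmem
              rw [Finset.mem_erase, Finset.mem_erase] at this
              exact this.2.1 rfl
            have hanotN : a ∉ msupp N := fun hmem => by
              have := msupp_subset hN hmem
              rw [Finset.mem_erase, Finset.mem_erase] at this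
              exact this.2.1 rfl
            have hbaM : (b, a) ∉ M := fun h => hanotM (mem_msupp.2 ⟨_, h, Or.inr rfl⟩)
            have hcaN : (c, a) ∉ N := fun h => hanotN (mem_msupp.2 ⟨_, h, Or.inr rfl⟩)
            have hbc : b = c := by
              have hmem : (b, a) ∈ insert (c, a) N := by
                rw [← heq]
                exact Finset.mem_insert_self _ _
              rcases Finset.mem_insert.1 hmem with h | h
              · exact congrArg Prod.fst h
              · exact absurd (mem_msupp.2 ⟨_, h, Or.inr rfl⟩) hanotN
            subst hbc
            have hMN : M = N := by
              rw [← Finset.erase_insert hbaM, heq, Finset.erase_insert hcaN]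
            subst hMN
            rfl
          · intro M' hM'
            rw [Finset.mem_filter] at hM'
            obtain ⟨hM'm, hamem⟩ := hM'
            obtain ⟨h1, h2, h3, h4⟩ := mem_matchF.1 hM'm
            obtain ⟨p, hp, hap⟩ := mem_msupp.1 hamem
            have hpa : p.2 = a := by
              rcases hap with h | h
              · exfalso
                have hlt := (h2 p hp).1
                have hle := Finset.le_max' A p.2 (h1 p hp).2
                omega
              · omega
            have hb : p.1 ∈ A.erase a := by
              refine Finset.mem_erase.2 ⟨?_, (h1 p hp).1⟩
              have hlt := (h2 p hp).1
              omega
            refine ⟨⟨p.1, M'.erase p⟩, ?_, ?_⟩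
            · rw [Finset.mem_sigma]
              refine ⟨hb, mem_matchF.2 ⟨?_, ?_, ?_, ?_⟩⟩
              · intro q hq
                have hqM : q ∈ M' := Finset.mem_of_mem_erase hq
                have hqp : q ≠ p := Finset.ne_of_mem_erase hq
                have h4q := h3 q hqM p hp hqp
                have hq1 := (h1 q hqM).1
                have hq2 := (h1 q hqM).2
                have hq1a : q.1 ≠ a := by
                  intro hcon
                  have hlt := (h2 q hqM).1
                  have hle := Finset.le_max' A q.2 hq2
                  omega
                have hq2a : q.2 ≠ a := by
                  rw [← hpa]
                  exact h4q.2.2.2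
                refine ⟨Finset.mem_erase.2 ⟨h4q.1, Finset.mem_erase.2 ⟨hq1a, hq1⟩⟩,
                  Finset.mem_erase.2 ⟨h4q.2.2.1, Finset.mem_erase.2 ⟨hq2a, hq2⟩⟩⟩
              · exact fun q hq => h2 q (Finset.mem_of_mem_erase hq)
              · exact fun q hq q' hq' => h3 q (Finset.mem_of_mem_erase hq) q'
                  (Finset.mem_of_mem_erase hq')
              · rw [Finset.card_erase_of_mem hp, h4]
                omega
            · have hpe : (p.1, a) = p := by
                rw [← hpa]
              dsimp only
              rw [hpe, Finset.insert_erase hp]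
        have hsplit := Finset.card_filter_add_card_filter_not
          (s := matchF A (r' + 1) Set.univ) (p := fun M => a ∈ msupp M)
        have hc : (matchF A (r' + 1) Set.univ).card
            = ((A.erase a).sigma fun b => matchF ((A.erase a).erase b) r' Set.univ).card
              + (matchF (A.erase a) (r' + 1) Set.univ).card := by
          rw [← hsplit, key1, key0]
        rw [hc]
        push_cast
        have e1 : ((((A.erase a).sigma fun b =>
              matchF ((A.erase a).erase b) r' Set.univ).card : ℕ) : ZMod 2)
            = (nn : ZMod 2) * ((Nat.choose (nn - 1) (2 * r') : ℕ) : ZMod 2) := by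
          rw [Finset.card_sigma]
          push_cast
          rw [Finset.sum_congr rfl (fun b hb => ih (nn - 1) (by omega) ((A.erase a).erase b)
            (by rw [Finset.card_erase_of_mem hb, hA']) r')]
          rw [Finset.sum_const, hA', nsmul_eq_mul]
        have e2 : (((matchF (A.erase a) (r' + 1) Set.univ).card : ℕ) : ZMod 2)
            = ((Nat.choose nn (2 * (r' + 1)) : ℕ) : ZMod 2) :=
          ih nn (by omega) (A.erase a) hA' (r' + 1)
        rw [e1, e2, choose_arith]
        ring

lemma disjoint_of_split {A : Finset ℕ} {i j : ℕ} {B : Set ℕ} {s t : Finset (ℕ × ℕ)}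
    (hs : s ∈ matchF A i B) (ht : t ∈ matchF (A \ msupp s) j Set.univ) : Disjoint s t := by
  rw [Finset.disjoint_left]
  intro p hps hpt
  have h1 := ((mem_matchF.1 ht).1 p hpt).1
  rw [Finset.mem_sdiff] at h1
  exact h1.2 (mem_msupp.2 ⟨p, hps, Or.inl rfl⟩)

lemma card_sigma_split (A : Finset ℕ) (B : Set ℕ) (k : ℕ) :
    ∑ i ∈ Finset.range (k + 1), ∑ s ∈ matchF A i B,
        (matchF (A \ msupp s) (k - i) Set.univ).card
      = ∑ M ∈ matchF A k Set.univ, 2 ^ ((M.filter fun p => p.1 + p.2 ∈ B).card) := by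
  have hL : ∀ i ∈ Finset.range (k + 1),
      (∑ s ∈ matchF A i B, (matchF (A \ msupp s) (k - i) Set.univ).card)
        = ((matchF A i B).sigma fun s => matchF (A \ msupp s) (k - i) Set.univ).card :=
    fun i _ => (Finset.card_sigma _ _).symm
  rw [Finset.sum_congr rfl hL, ← Finset.card_sigma]
  have hR : ∑ M ∈ matchF A k Set.univ, 2 ^ ((M.filter fun p => p.1 + p.2 ∈ B).card)
      = ((matchF A k Set.univ).sigma fun M =>
          (M.filter fun p => p.1 + p.2 ∈ B).powerset).card := by
    rw [Finset.card_sigma]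
    exact Finset.sum_congr rfl fun M _ => (Finset.card_powerset _).symm
  rw [hR]
  refine Finset.card_bij (fun x _ => (⟨x.2.1 ∪ x.2.2, x.2.1⟩ :
    (M : Finset (ℕ × ℕ)) × Finset (ℕ × ℕ))) ?_ ?_ ?_
  · rintro ⟨i, s, t⟩ hx
    rw [Finset.mem_sigma] at hx
    obtain ⟨hx1, hx2⟩ := hx
    rw [Finset.mem_sigma] at hx2
    obtain ⟨hs, ht⟩ := hx2
    dsimp only at hs ht hx1 ⊢
    obtain ⟨hs1, hs2, hs3, hs4⟩ := mem_matchF.1 hs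
    obtain ⟨ht1, ht2, ht3, ht4⟩ := mem_matchF.1 ht
    have hik : i ≤ k := by have := Finset.mem_range.1 hx1; omega
    have htA : ∀ p ∈ t, p.1 ∈ A ∧ p.2 ∈ A ∧ p.1 ∉ msupp s ∧ p.2 ∉ msupp s := by
      intro p hp
      have h1 := (ht1 p hp).1
      have h2 := (ht1 p hp).2
      rw [Finset.mem_sdiff] at h1 h2
      exact ⟨h1.1, h2.1, h1.2, h2.2⟩
    have hdisjst : Disjoint s t := disjoint_of_split hs ht
    rw [Finset.mem_sigma]
    refine ⟨mem_matchF.2 ⟨?_, ?_, ?_, ?_⟩, ?_⟩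
    · intro p hp
      rcases Finset.mem_union.1 hp with h | h
      · exact hs1 p h
      · exact ⟨(htA p h).1, (htA p h).2.1⟩
    · intro p hp
      rcases Finset.mem_union.1 hp with h | h
      · exact ⟨(hs2 p h).1, Set.mem_univ _⟩
      · exact ht2 p h
    · intro p hp q hq hpq
      rcases Finset.mem_union.1 hp with h | h <;> rcases Finset.mem_union.1 hq with h' | h'
      · exact hs3 p h q h' hpq
      · have hp1 : p.1 ∈ msupp s := mem_msupp.2 ⟨p, h, Or.inl rfl⟩
        have hp2 : p.2 ∈ msupp s := mem_msupp.2 ⟨p, h, Or.inr rfl⟩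
        have hq' := htA q h'
        refine ⟨fun hcon => ?_, fun hcon => ?_, fun hcon => ?_, fun hcon => ?_⟩
        · exact hq'.2.2.1 (show q.1 ∈ msupp s by rw [← hcon]; exact hp1)
        · exact hq'.2.2.2 (show q.2 ∈ msupp s by rw [← hcon]; exact hp1)
        · exact hq'.2.2.1 (show q.1 ∈ msupp s by rw [← hcon]; exact hp2)
        · exact hq'.2.2.2 (show q.2 ∈ msupp s by rw [← hcon]; exact hp2)
      · have hq1 : q.1 ∈ msupp s := mem_msupp.2 ⟨q, h', Or.inl rfl⟩
        have hq2 : q.2 ∈ msupp s := mem_msupp.2 ⟨q, h', Or.inr rfl⟩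
        have hp' := htA p h
        refine ⟨fun hcon => ?_, fun hcon => ?_, fun hcon => ?_, fun hcon => ?_⟩
        · exact hp'.2.2.1 (show p.1 ∈ msupp s by rw [hcon]; exact hq1)
        · exact hp'.2.2.1 (show p.1 ∈ msupp s by rw [hcon]; exact hq2)
        · exact hp'.2.2.2 (show p.2 ∈ msupp s by rw [hcon]; exact hq1)
        · exact hp'.2.2.2 (show p.2 ∈ msupp s by rw [hcon]; exact hq2)
      · exact ht3 p h q h' hpq
    · rw [Finset.card_union_of_disjoint hdisjst, hs4, ht4]
      omega
    · rw [Finset.mem_powerset]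
      intro p hp
      rw [Finset.mem_filter]
      exact ⟨Finset.mem_union_left _ hp, (hs2 p hp).2⟩
  · rintro ⟨i, s, t⟩ hx ⟨i', s', t'⟩ hy heq
    rw [Finset.mem_sigma] at hx hy
    obtain ⟨hx1, hx2⟩ := hx
    obtain ⟨hy1, hy2⟩ := hy
    rw [Finset.mem_sigma] at hx2 hy2
    obtain ⟨hs, ht⟩ := hx2
    obtain ⟨hs', ht'⟩ := hy2
    dsimp only at hs ht hs' ht' heq
    injection heq with e1 e2
    have e2' : s = s' := e2
    subst e2'
    have hdisj1 : Disjoint s t := disjoint_of_split hs ht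
    have hdisj2 : Disjoint s t' := disjoint_of_split hs' ht'
    have et : t = t' := by
      rw [← Finset.union_sdiff_cancel_left hdisj1, ← Finset.union_sdiff_cancel_left hdisj2, e1]
    subst et
    have ei : i = i' := by
      have c1 : s.card = i := (mem_matchF.1 hs).2.2.2
      have c2 : s.card = i' := (mem_matchF.1 hs').2.2.2
      omega
    subst ei
    rfl
  · rintro ⟨M, s⟩ hy
    rw [Finset.mem_sigma] at hy
    obtain ⟨hM, hsub⟩ := hy
    dsimp only at hM hsub
    rw [Finset.mem_powerset] at hsub
    obtain ⟨hM1, hM2, hM3, hM4⟩ := mem_matchF.1 hM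
    have hsM : s ⊆ M := hsub.trans (Finset.filter_subset _ _)
    have hsmem : s ∈ matchF A s.card B := mem_matchF.2 ⟨fun p hp => hM1 p (hsM hp),
      fun p hp => ⟨(hM2 p (hsM hp)).1, (Finset.mem_filter.1 (hsub hp)).2⟩,
      fun p hp q hq => hM3 p (hsM hp) q (hsM hq), rfl⟩
    have htmem : M \ s ∈ matchF (A \ msupp s) (k - s.card) Set.univ := by
      refine mem_matchF.2 ⟨?_, ?_, ?_, ?_⟩
      · intro p hp
        rw [Finset.mem_sdiff] at hp
        obtain ⟨hpM, hps⟩ := hp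
        have hnot1 : p.1 ∉ msupp s := by
          intro hcon
          obtain ⟨q, hq, hcc⟩ := mem_msupp.1 hcon
          have hqM : q ∈ M := hsM hq
          have hpq : p ≠ q := fun h => hps (by rw [h]; exact hq)
          have h4 := hM3 p hpM q hqM hpq
          rcases hcc with h | h
          · exact h4.1 h
          · exact h4.2.1 h
        have hnot2 : p.2 ∉ msupp s := by
          intro hcon
          obtain ⟨q, hq, hcc⟩ := mem_msupp.1 hcon
          have hqM : q ∈ M := hsM hq
          have hpq : p ≠ q := fun h => hps (by rw [h]; exact hq)
          have h4 := hM3 p hpM q hqM hpq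
          rcases hcc with h | h
          · exact h4.2.2.1 h
          · exact h4.2.2.2 h
        exact ⟨Finset.mem_sdiff.2 ⟨(hM1 p hpM).1, hnot1⟩,
          Finset.mem_sdiff.2 ⟨(hM1 p hpM).2, hnot2⟩⟩
      · exact fun p hp => ⟨(hM2 p (Finset.mem_sdiff.1 hp).1).1, Set.mem_univ _⟩
      · exact fun p hp q hq => hM3 p (Finset.mem_sdiff.1 hp).1 q (Finset.mem_sdiff.1 hq).1
      · rw [Finset.card_sdiff_of_subset hsM, hM4]
    refine ⟨⟨s.card, s, M \ s⟩, ?_, ?_⟩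
    · rw [Finset.mem_sigma]
      dsimp only
      refine ⟨Finset.mem_range.2 ?_, ?_⟩
      · have := Finset.card_le_card hsM
        omega
      · rw [Finset.mem_sigma]
        exact ⟨hsmem, htmem⟩
    · dsimp only
      rw [Finset.union_sdiff_of_subset hsM]

lemma filter_noB (A : Finset ℕ) (k : ℕ) (B : Set ℕ) :
    ((matchF A k Set.univ).filter fun M => (M.filter fun p => p.1 + p.2 ∈ B).card = 0)
      = matchF A k Bᶜ := by
  ext M
  simp only [Finset.mem_filter, mem_matchF, Finset.card_eq_zero,
    Finset.filter_eq_empty_iff]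
  constructor
  · rintro ⟨⟨h1, h2, h3, h4⟩, h5⟩
    exact ⟨h1, fun p hp => ⟨(h2 p hp).1, h5 hp⟩, h3, h4⟩
  · rintro ⟨h1, h2, h3, h4⟩
    exact ⟨⟨h1, fun p hp => ⟨(h2 p hp).1, Set.mem_univ _⟩, h3, h4⟩,
      fun {p} hp => (h2 p hp).2⟩

lemma main_general (A : Finset ℕ) (B : Set ℕ) (m k : ℕ) (hAcard : A.card = m) :
    ((∑ i ∈ Finset.range (k + 1), mu A i B * Nat.choose (m - 2 * i) (2 * k - 2 * i) : ℕ) : ZMod 2)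
      = ((mu A k Bᶜ : ℕ) : ZMod 2) := by
  simp only [mu_eq_card_matchF]
  push_cast
  have step1 : ∀ i ∈ Finset.range (k + 1),
      ((matchF A i B).card : ZMod 2) * (((m - 2 * i).choose (2 * k - 2 * i) : ℕ) : ZMod 2)
        = ∑ s ∈ matchF A i B, ((matchF (A \ msupp s) (k - i) Set.univ).card : ZMod 2) := by
    intro i hi
    have hik : i ≤ k := by have := Finset.mem_range.1 hi; omega
    have hval : ∀ s ∈ matchF A i B,
        ((matchF (A \ msupp s) (k - i) Set.univ).card : ZMod 2)
          = (((m - 2 * i).choose (2 * k - 2 * i) : ℕ) : ZMod 2) := by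
      intro s hs
      obtain ⟨h1, h2, h3, h4⟩ := mem_matchF.1 hs
      have hsub : msupp s ⊆ A := msupp_subset hs
      have hcsupp : (msupp s).card = 2 * i := by
        rw [card_msupp (fun p hp => (h2 p hp).1) h3, h4]
      have hcc : (A \ msupp s).card = m - 2 * i := by
        rw [Finset.card_sdiff_of_subset hsub, hcsupp, hAcard]
      have h2k : 2 * (k - i) = 2 * k - 2 * i := by omega
      rw [part2 (m - 2 * i) _ hcc (k - i), h2k]
    rw [Finset.sum_congr rfl hval, Finset.sum_const, nsmul_eq_mul]
  rw [Finset.sum_congr rfl step1]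
  have hnat : (∑ i ∈ Finset.range (k + 1), ∑ s ∈ matchF A i B,
      ((matchF (A \ msupp s) (k - i) Set.univ).card : ZMod 2))
      = ((∑ i ∈ Finset.range (k + 1), ∑ s ∈ matchF A i B,
        (matchF (A \ msupp s) (k - i) Set.univ).card : ℕ) : ZMod 2) := by
    push_cast
    rfl
  rw [hnat, card_sigma_split A B k, ← filter_noB A k B, Finset.card_filter]
  push_cast
  refine Finset.sum_congr rfl fun M _ => ?_
  rcases Nat.eq_zero_or_pos ((M.filter fun p => p.1 + p.2 ∈ B).card) with h | h
  · rw [h]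
    simp
  · obtain ⟨j, hj⟩ : ∃ j, (M.filter fun p => p.1 + p.2 ∈ B).card = j + 1 :=
      ⟨(M.filter fun p => p.1 + p.2 ∈ B).card - 1, by omega⟩
    rw [hj, if_neg (by omega), pow_succ]
    rw [show (2 : ZMod 2) = 0 from by decide]
    ring

lemma card_smallest_Pset (m : ℕ) : (smallest Pset m).card = m := by
  have hinf : (setOf (· ∈ Pset)).Infinite := by
    apply Set.infinite_of_injective_forall_mem (f := fun n : ℕ => 4 * n)
    · intro a b h
      simp only at h
      omega
    · intro a
      show 4 * a ∈ Pset
      exact Or.inl (by omega)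
  rw [smallest, Finset.card_image_of_injective _ (Nat.nth_injective hinf),
    Finset.card_range]

end MatchAux

theorem stmt_13 (m k : ℕ) (hm : 1 ≤ m) (hk : 1 ≤ k) :
    (∑ i ∈ Finset.range (k + 1),
        mu (smallest Pset m) i Jstar * Nat.choose (m - 2 * i) (2 * k - 2 * i)) ≡
      mu (smallest Pset m) k Lset [MOD 2] := by
  rw [← ZMod.natCast_eq_natCast_iff]
  rw [show Lset = Jstarᶜ from rfl]
  exact main_general (smallest Pset m) Jstar m k (card_smallest_Pset m)
end
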